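/- Let ≺ ∈ IPos_p and 1 ≤ q ≤ r ≤ p. Then WOIPd(≺_{[q,r]}) = (WOIPd ≺)_{[q,r]}. Consequently, for ⋖ ∈ WOIP_m and ⋖' ∈ WOIP_n, the set {≺ ∈ IPos_{m+n} : WOIPd(≺_{[1,m]}) = ⋖ and WOIPd(≺_{[m+1,m+n]}) = ⋖'} is the disjoint union, over all ⊏ ∈ (⋖ ⧢ ⋖') ∩ WOIP_{m+n}, of the sets {≺ ∈ IPos_{m+n} : WOIPd(≺) = ⊏}. The same statements hold with WOIPd replaced by IWOIPid (and WOIP by IWOIP) or by DWOIPdd (and WOIP by DWOIP). -/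

import Mathlib

namespace IntegerRelations

/-- An integer relation of size `p` is a reflexive binary relation on `Fin p`,
encoded as a set of pairs; `IsIRel R` says that `R` is reflexive. -/
def IsIRel {p : ℕ} (R : Set (Fin p × Fin p)) : Prop :=
  ∀ i : Fin p, (i, i) ∈ R

/-- The increasing subrelation `Inc R`. -/
def inc {p : ℕ} (R : Set (Fin p × Fin p)) : Set (Fin p × Fin p) :=
  {x ∈ R | x.1 < x.2}

/-- The decreasing subrelation `Dec R`. -/
def dec {p : ℕ} (R : Set (Fin p × Fin p)) : Set (Fin p × Fin p) :=
  {x ∈ R | x.2 < x.1}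

/-- The weak order: `R ≼ S` iff `Inc R ⊇ Inc S` and `Dec R ⊆ Dec S`. -/
def WOle {p : ℕ} (R S : Set (Fin p × Fin p)) : Prop :=
  inc S ⊆ inc R ∧ dec R ⊆ dec S

/-- Standardized restriction of a relation to a subset `X` of cardinality `k`. -/
def restrict {p k : ℕ} (R : Set (Fin p × Fin p)) (X : Finset (Fin p))
    (h : X.card = k) : Set (Fin k × Fin k) :=
  {x | ((X.orderIsoOfFin h x.1 : Fin p), (X.orderIsoOfFin h x.2 : Fin p)) ∈ R}

/-- Standardized restriction of a relation to the block of `k` consecutive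
positions starting at offset `o` (`0`-indexed). -/
def restrictRange {p : ℕ} (R : Set (Fin p × Fin p)) (o k : ℕ) :
    Set (Fin k × Fin k) :=
  {x | ∃ (h₁ : o + (x.1 : ℕ) < p) (h₂ : o + (x.2 : ℕ) < p),
      ((⟨o + (x.1 : ℕ), h₁⟩ : Fin p), (⟨o + (x.2 : ℕ), h₂⟩ : Fin p)) ∈ R}

/-- The relation `R` placed on the first `m` values of `[m+n]`. -/
def shiftL {m n : ℕ} (R : Set (Fin m × Fin m)) :
    Set (Fin (m + n) × Fin (m + n)) :=
  {x | ∃ y ∈ R, x = (Fin.castAdd n y.1, Fin.castAdd n y.2)}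

/-- The relation `S` shifted to the last `n` values of `[m+n]`. -/
def shiftR {m n : ℕ} (S : Set (Fin n × Fin n)) :
    Set (Fin (m + n) × Fin (m + n)) :=
  {x | ∃ y ∈ S, x = (Fin.natAdd m y.1, Fin.natAdd m y.2)}

/-- The full block `[m] × [n̄]`. -/
def lowHigh (m n : ℕ) : Set (Fin (m + n) × Fin (m + n)) :=
  {x | (x.1 : ℕ) < m ∧ m ≤ (x.2 : ℕ)}

/-- The full block `[n̄] × [m]`. -/
def highLow (m n : ℕ) : Set (Fin (m + n) × Fin (m + n)) :=
  {x | m ≤ (x.1 : ℕ) ∧ (x.2 : ℕ) < m}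

/-- The shifted shuffle `R ⧢ S` of two integer relations. -/
def shiftedShuffle {m n : ℕ} (R : Set (Fin m × Fin m)) (S : Set (Fin n × Fin n)) :
    Set (Set (Fin (m + n) × Fin (m + n))) :=
  {T | ∃ I D : Set (Fin (m + n) × Fin (m + n)),
      I ⊆ lowHigh m n ∧ D ⊆ highLow m n ∧
      T = shiftL R ∪ shiftR S ∪ I ∪ D}

/-- `underprod R S = R ∪ S̄ ∪ ([m] × [n̄])`. -/
def underprod {m n : ℕ} (R : Set (Fin m × Fin m)) (S : Set (Fin n × Fin n)) :
    Set (Fin (m + n) × Fin (m + n)) :=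
  shiftL R ∪ shiftR S ∪ lowHigh m n

/-- `overprod R S = R ∪ S̄ ∪ ([n̄] × [m])`. -/
def overprod {m n : ℕ} (R : Set (Fin m × Fin m)) (S : Set (Fin n × Fin n)) :
    Set (Fin (m + n) × Fin (m + n)) :=
  shiftL R ∪ shiftR S ∪ highLow m n

/-- A total cut `(X, Y)` of a relation `T`. -/
def IsTotalCut {p : ℕ} (T : Set (Fin p × Fin p)) (X Y : Finset (Fin p)) : Prop :=
  (∀ i : Fin p, i ∈ X ∨ i ∈ Y) ∧ Disjoint X Y ∧
    ∀ x ∈ X, ∀ y ∈ Y, (x, y) ∈ T ∧ (y, x) ∉ T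

/-- The convolution `R ∗ S` of two integer relations. -/
def convolution {m n : ℕ} (R : Set (Fin m × Fin m)) (S : Set (Fin n × Fin n)) :
    Set (Set (Fin (m + n) × Fin (m + n))) :=
  {T | ∃ (X Y : Finset (Fin (m + n))) (hX : X.card = m) (hY : Y.card = n),
      IsTotalCut T X Y ∧ restrict T X hX = R ∧ restrict T Y hY = S}

/-- An integer poset: a reflexive, antisymmetric and transitive integer relation. -/
def IsIPos {p : ℕ} (T : Set (Fin p × Fin p)) : Prop :=
  IsIRel T ∧ (∀ a b : Fin p, (a, b) ∈ T → (b, a) ∈ T → a = b) ∧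
    ∀ a b c : Fin p, (a, b) ∈ T → (b, c) ∈ T → (a, c) ∈ T

/-- A total order: an integer poset in which any two elements are comparable
(these are exactly the weak order element posets, `WOEP`). -/
def IsITotal {p : ℕ} (T : Set (Fin p × Fin p)) : Prop :=
  IsIPos T ∧ ∀ a b : Fin p, (a, b) ∈ T ∨ (b, a) ∈ T

/-- `T` admits a primitive cut at `k` (here positions are `0`-indexed, so the
`1`-indexed condition `i ≤ k < j` reads `i < k ≤ j`). -/
def HasPrimitiveCutAt {p : ℕ} (T : Set (Fin p × Fin p)) (k : ℕ) : Prop :=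
  ∀ i j : Fin p, (i : ℕ) < k → k ≤ (j : ℕ) → (i, j) ∈ T ∧ (j, i) ∉ T

/-- `T` is under-indecomposable: no non-trivial primitive cut. -/
def UnderIndecomposable {p : ℕ} (T : Set (Fin p × Fin p)) : Prop :=
  ∀ k : ℕ, 0 < k → k < p → ¬ HasPrimitiveCutAt T k

/-- Membership in `IWOIP`. -/
def InIWOIP {p : ℕ} (T : Set (Fin p × Fin p)) : Prop :=
  IsIPos T ∧ ∀ a b c : Fin p, a < b → b < c → (a, c) ∈ T → (a, b) ∈ T ∨ (b, c) ∈ T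

/-- Membership in `DWOIP`. -/
def InDWOIP {p : ℕ} (T : Set (Fin p × Fin p)) : Prop :=
  IsIPos T ∧ ∀ a b c : Fin p, a < b → b < c → (c, a) ∈ T → (b, a) ∈ T ∨ (c, b) ∈ T

/-- Membership in `WOIP = IWOIP ∩ DWOIP`. -/
def InWOIP {p : ℕ} (T : Set (Fin p × Fin p)) : Prop := InIWOIP T ∧ InDWOIP T

/-- Membership in `WOFP`. -/
def InWOFP {p : ℕ} (T : Set (Fin p × Fin p)) : Prop :=
  InWOIP T ∧ ∀ a b c : Fin p, a < b → b < c → (a, c) ∉ T → (c, a) ∉ T →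
    (((a, b) ∈ T ↔ (c, b) ∈ T) ∧ ((b, a) ∈ T ↔ (b, c) ∈ T))

/-- The `IWOIP` increasing deletion. -/
def IWOIPid {p : ℕ} (T : Set (Fin p × Fin p)) : Set (Fin p × Fin p) :=
  T \ {x | x.1 < x.2 ∧ ∃ l : List (Fin p), l ≠ [] ∧
      List.Chain (fun a b : Fin p => a < b ∧ (a, b) ∉ T) x.1 (l ++ [x.2])}

/-- The `DWOIP` decreasing deletion. -/
def DWOIPdd {p : ℕ} (T : Set (Fin p × Fin p)) : Set (Fin p × Fin p) :=
  T \ {x | x.2 < x.1 ∧ ∃ l : List (Fin p), l ≠ [] ∧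
      List.Chain (fun a b : Fin p => a < b ∧ (b, a) ∉ T) x.2 (l ++ [x.1])}

/-- The `WOIP` deletion. -/
def WOIPd {p : ℕ} (T : Set (Fin p × Fin p)) : Set (Fin p × Fin p) :=
  IWOIPid (DWOIPdd T)

/-- The chain poset `≺_σ` of a permutation: `u ≺_σ v` iff `σ⁻¹ u ≤ σ⁻¹ v`. -/
def chainPoset {p : ℕ} (σ : Equiv.Perm (Fin p)) : Set (Fin p × Fin p) :=
  {x | σ.symm x.1 ≤ σ.symm x.2}

/-- The shifted shuffle of two permutations. -/
def permShiftedShuffle {m n : ℕ} (σ : Equiv.Perm (Fin m)) (τ : Equiv.Perm (Fin n)) :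
    Set (Equiv.Perm (Fin (m + n))) :=
  {ρ | (∀ u v : Fin m,
        ρ.symm (Fin.castAdd n u) < ρ.symm (Fin.castAdd n v) ↔ σ.symm u < σ.symm v) ∧
      ∀ u v : Fin n,
        ρ.symm (Fin.natAdd m u) < ρ.symm (Fin.natAdd m v) ↔ τ.symm u < τ.symm v}

/-- The convolution of two permutations. -/
def permConvolution {m n : ℕ} (σ : Equiv.Perm (Fin m)) (τ : Equiv.Perm (Fin n)) :
    Set (Equiv.Perm (Fin (m + n))) :=
  {ρ | (∀ i j : Fin m, ρ (Fin.castAdd n i) < ρ (Fin.castAdd n j) ↔ σ i < σ j) ∧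
      ∀ i j : Fin n, ρ (Fin.natAdd m i) < ρ (Fin.natAdd m j) ↔ τ i < τ j}

/-- Relabelling of a relation along a bijection. -/
def relabel {p q : ℕ} (e : Fin p ≃ Fin q) (T : Set (Fin p × Fin p)) :
    Set (Fin q × Fin q) :=
  {x | (e.symm x.1, e.symm x.2) ∈ T}

/-- The diagonal `Δ_p`. -/
def diagonal (p : ℕ) : Set (Fin p × Fin p) := {x | x.1 = x.2}

/-!
`IWOIPid T` deletes from `T` the pairs `a < c` joined by an increasing path of pairs outside `T`
(a `Gap T` path), and `DWOIPdd` is its mirror image under transposition. Gap paths are increasing,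
so they never leave an interval containing their ends: this is why the deletions commute with
restriction to intervals. For a transitive `T`, a gap path from `a` to `c` passing over `b`
splits at `b` into a gap path ending or starting at `b`; hence `IWOIPid T` is again a poset, and
it lies in `IWOIP`. Finally a relation on `[m + n]` lies in `A ⧢ B` exactly when its restrictions
to `[1, m]` and `[m + 1, m + n]` are `A` and `B`, so by the first part each fiber over `(A, B)` is
partitioned according to the value of the deletion.
-/

theorem _root_.List.exists_isChain_cons_append_singleton_iff_transGen {α : Type*} {r : α → α → Prop}
    {a c : α} : (∃ l : List α, List.IsChain r (a :: (l ++ [c]))) ↔ Relation.TransGen r a c := by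
  constructor
  · rintro ⟨l, hl⟩
    induction l generalizing a with
    | nil => exact .single (by simpa using hl)
    | cons b l ih =>
      rw [List.cons_append, List.isChain_cons_cons] at hl
      exact .head hl.1 (ih hl.2)
  · intro h
    induction h using Relation.TransGen.head_induction_on with
    | single h => exact ⟨[], by simpa using h⟩
    | head h _ ih =>
      obtain ⟨l, hl⟩ := ih
      exact ⟨_ :: l, List.isChain_cons_cons.2 ⟨h, hl⟩⟩

variable {p : ℕ}

def Gap (T : Set (Fin p × Fin p)) (a b : Fin p) : Prop := a < b ∧ (a, b) ∉ T

namespace Gap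

variable {T : Set (Fin p × Fin p)} {a b c : Fin p}

theorem transGen_lt (h : Relation.TransGen (Gap T) a b) : a < b := by
  induction h with
  | single h => exact h.1
  | tail _ h ih => exact ih.trans h.1

theorem split (htr : ∀ x y z, (x, y) ∈ T → (y, z) ∈ T → (x, z) ∈ T)
    (h : Gap T a c) (hab : a < b) (hbc : b < c) : Gap T a b ∨ Gap T b c := by
  by_cases hT : (a, b) ∈ T
  · exact .inr ⟨hbc, fun h' => h.2 (htr _ _ _ hT h')⟩
  · exact .inl ⟨hab, hT⟩

theorem transGen_split (htr : ∀ x y z, (x, y) ∈ T → (y, z) ∈ T → (x, z) ∈ T)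
    (h : Relation.TransGen (Gap T) a c) (hab : a < b) (hbc : b < c) :
    Relation.TransGen (Gap T) a b ∨ Relation.TransGen (Gap T) b c := by
  induction h using Relation.TransGen.head_induction_on generalizing b with
  | single h => exact (h.split htr hab hbc).imp .single .single
  | @head a d had hdc ih =>
    rcases lt_trichotomy b d with hbd | rfl | hdb
    · exact (had.split htr hab hbd).imp .single (.head · hdc)
    · exact .inr hdc
    · exact (ih hdb hbc).imp (.head had) id

theorem transGen_of_mem_left (htr : ∀ x y z, (x, y) ∈ T → (y, z) ∈ T → (x, z) ∈ T)
    (hab : (a, b) ∈ T) (hba : b ≤ a) (h : Relation.TransGen (Gap T) a c) :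
    Relation.TransGen (Gap T) b c := by
  obtain ⟨d, had, hdc⟩ := Relation.TransGen.head'_iff.1 h
  exact .head' ⟨hba.trans_lt had.1, fun hbd => had.2 (htr _ _ _ hab hbd)⟩ hdc

theorem transGen_of_mem_right (htr : ∀ x y z, (x, y) ∈ T → (y, z) ∈ T → (x, z) ∈ T)
    (hbc : (b, c) ∈ T) (hcb : c ≤ b) (h : Relation.TransGen (Gap T) a c) :
    Relation.TransGen (Gap T) a b := by
  obtain ⟨d, had, hdc⟩ := Relation.TransGen.tail'_iff.1 h
  exact .tail' had ⟨hdc.1.trans_le hcb, fun hdb => hdc.2 (htr _ _ _ hdb hbc)⟩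

end Gap

variable {T : Set (Fin p × Fin p)}

theorem mem_IWOIPid_iff {x : Fin p × Fin p} :
    x ∈ IWOIPid T ↔ x ∈ T ∧ ¬ Relation.TransGen (Gap T) x.1 x.2 := by
  simp only [IWOIPid, Set.mem_sdiff, Set.mem_ofPred_eq]
  -- The definition asks for paths of length at least two, but for a pair of `T` a single
  -- `Gap T` step is impossible anyway.
  refine and_congr_right fun hx => not_congr ⟨?_, fun h => ?_⟩
  · rintro ⟨-, l, -, hl⟩
    exact List.exists_isChain_cons_append_singleton_iff_transGen.1 ⟨l, hl⟩
  · obtain ⟨l, hl⟩ := List.exists_isChain_cons_append_singleton_iff_transGen.2 h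
    refine ⟨Gap.transGen_lt h, l, ?_, hl⟩
    rintro rfl
    exact (by simpa using hl : Gap T x.1 x.2).2 hx

theorem IWOIPid_subset : IWOIPid T ⊆ T := fun _ hx => (mem_IWOIPid_iff.1 hx).1

theorem mem_IWOIPid_of_not_lt {x : Fin p × Fin p} (hx : x ∈ T) (h : ¬ x.1 < x.2) :
    x ∈ IWOIPid T :=
  mem_IWOIPid_iff.2 ⟨hx, fun hg => h (Gap.transGen_lt hg)⟩

theorem transGen_of_not_mem_IWOIPid {a b : Fin p} (hab : a < b) (h : (a, b) ∉ IWOIPid T) :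
    Relation.TransGen (Gap T) a b := by
  by_cases hT : (a, b) ∈ T
  · simpa [mem_IWOIPid_iff, hT] using h
  · exact .single ⟨hab, hT⟩

theorem isIPos_IWOIPid (hT : IsIPos T) : IsIPos (IWOIPid T) := by
  obtain ⟨hrefl, hanti, htr⟩ := hT
  refine ⟨fun i => mem_IWOIPid_of_not_lt (hrefl i) (lt_irrefl i),
    fun a b hab hba => hanti a b (IWOIPid_subset hab) (IWOIPid_subset hba),
    fun a b c hab hbc => mem_IWOIPid_iff.2 ⟨htr _ _ _ (IWOIPid_subset hab) (IWOIPid_subset hbc),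
      fun hac => ?_⟩⟩
  have hab' := mem_IWOIPid_iff.1 hab
  have hbc' := mem_IWOIPid_iff.1 hbc
  rcases le_or_gt b a with hba | hab_lt
  · exact hbc'.2 (Gap.transGen_of_mem_left htr hab'.1 hba hac)
  rcases le_or_gt c b with hcb | hbc_lt
  · exact hab'.2 (Gap.transGen_of_mem_right htr hbc'.1 hcb hac)
  rcases Gap.transGen_split htr hac hab_lt hbc_lt with h | h
  exacts [hab'.2 h, hbc'.2 h]

theorem inIWOIP_IWOIPid (hT : IsIPos T) : InIWOIP (IWOIPid T) := by
  refine ⟨isIPos_IWOIPid hT, fun a b c hab hbc hac => ?_⟩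
  by_contra! h
  exact (mem_IWOIPid_iff.1 hac).2
    ((transGen_of_not_mem_IWOIPid hab h.1).trans (transGen_of_not_mem_IWOIPid hbc h.2))

theorem inDWOIP_IWOIPid (hT : InDWOIP T) : InDWOIP (IWOIPid T) := by
  refine ⟨isIPos_IWOIPid hT.1, fun a b c hab hbc hca => ?_⟩
  exact (hT.2 a b c hab hbc (IWOIPid_subset hca)).imp
    (mem_IWOIPid_of_not_lt · (not_lt.2 hab.le)) (mem_IWOIPid_of_not_lt · (not_lt.2 hbc.le))

theorem DWOIPdd_eq_swap_IWOIPid_swap (T : Set (Fin p × Fin p)) :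
    DWOIPdd T = Prod.swap ⁻¹' IWOIPid (Prod.swap ⁻¹' T) := rfl

theorem isIPos_preimage_swap (hT : IsIPos T) : IsIPos (Prod.swap ⁻¹' T) :=
  ⟨fun i => hT.1 i, fun a b h1 h2 => (hT.2.1 b a h1 h2).symm,
    fun _ _ _ h1 h2 => hT.2.2 _ _ _ h2 h1⟩

theorem inDWOIP_preimage_swap (hT : InIWOIP T) : InDWOIP (Prod.swap ⁻¹' T) :=
  ⟨isIPos_preimage_swap hT.1, hT.2⟩

theorem inDWOIP_DWOIPdd (hT : IsIPos T) : InDWOIP (DWOIPdd T) :=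
  inDWOIP_preimage_swap (inIWOIP_IWOIPid (isIPos_preimage_swap hT))

theorem inWOIP_WOIPd (hT : IsIPos T) : InWOIP (WOIPd T) :=
  ⟨inIWOIP_IWOIPid (inDWOIP_DWOIPdd hT).1, inDWOIP_IWOIPid (inDWOIP_DWOIPdd hT)⟩

section Preimage

variable {k : ℕ} {f : Fin k → Fin p}

/-- `Gap` paths are increasing, so one joining two points of an order-convex range stays in it. -/
theorem transGen_gap_preimage_iff (hf : StrictMono f) (hconn : (Set.range f).OrdConnected)
    {u v : Fin k} :
    Relation.TransGen (Gap (Prod.map f f ⁻¹' T)) u v ↔ Relation.TransGen (Gap T) (f u) (f v) := by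
  have gap_iff : ∀ {u v}, Gap (Prod.map f f ⁻¹' T) u v ↔ Gap T (f u) (f v) := by
    intro u v
    simp only [Gap, hf.lt_iff_lt, Set.mem_preimage, Prod.map]
  refine ⟨fun h => Relation.TransGen.lift f (fun _ _ => gap_iff.1) _ _ h, fun h => ?_⟩
  generalize hx : f u = x at h
  induction h using Relation.TransGen.head_induction_on generalizing u with
  | single h => subst hx; exact .single (gap_iff.2 h)
  | @head x y hxy hyv ih =>
    subst hx
    obtain ⟨w, rfl⟩ : y ∈ Set.range f :=
      hconn.out ⟨u, rfl⟩ ⟨v, rfl⟩ ⟨hxy.1.le, (Gap.transGen_lt hyv).le⟩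
    exact .head (gap_iff.2 hxy) (ih rfl)

theorem IWOIPid_preimage (hf : StrictMono f) (hconn : (Set.range f).OrdConnected)
    (T : Set (Fin p × Fin p)) :
    IWOIPid (Prod.map f f ⁻¹' T) = Prod.map f f ⁻¹' IWOIPid T := by
  ext ⟨u, v⟩
  simp only [mem_IWOIPid_iff, Set.mem_preimage, Prod.map, transGen_gap_preimage_iff hf hconn]

theorem DWOIPdd_preimage (hf : StrictMono f) (hconn : (Set.range f).OrdConnected)
    (T : Set (Fin p × Fin p)) :
    DWOIPdd (Prod.map f f ⁻¹' T) = Prod.map f f ⁻¹' DWOIPdd T := by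
  simp only [DWOIPdd_eq_swap_IWOIPid_swap]
  exact congrArg (Prod.swap ⁻¹' ·) (IWOIPid_preimage hf hconn (Prod.swap ⁻¹' T))

theorem WOIPd_preimage (hf : StrictMono f) (hconn : (Set.range f).OrdConnected)
    (T : Set (Fin p × Fin p)) :
    WOIPd (Prod.map f f ⁻¹' T) = Prod.map f f ⁻¹' WOIPd T := by
  rw [WOIPd, DWOIPdd_preimage hf hconn, IWOIPid_preimage hf hconn, WOIPd]

end Preimage

section Restriction

variable {o k : ℕ}

def blockEmb (h : o + k ≤ p) (i : Fin k) : Fin p := ⟨o + i, by omega⟩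

theorem strictMono_blockEmb (h : o + k ≤ p) : StrictMono (blockEmb h) :=
  fun i j hij => by simp [blockEmb, Fin.lt_def, hij]

theorem ordConnected_range_blockEmb (h : o + k ≤ p) : (Set.range (blockEmb h)).OrdConnected := by
  refine ⟨?_⟩
  rintro _ ⟨i, rfl⟩ _ ⟨j, rfl⟩ c ⟨hic, hcj⟩
  simp only [blockEmb, Fin.le_def] at hic hcj
  exact ⟨⟨c - o, by omega⟩, Fin.ext (by simp [blockEmb]; omega)⟩

theorem restrictRange_eq_preimage (h : o + k ≤ p) (T : Set (Fin p × Fin p)) :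
    restrictRange T o k = Prod.map (blockEmb h) (blockEmb h) ⁻¹' T := by
  ext x
  exact ⟨fun ⟨_, _, hx⟩ => hx, fun hx => ⟨(blockEmb h x.1).isLt, (blockEmb h x.2).isLt, hx⟩⟩

theorem IWOIPid_restrictRange (h : o + k ≤ p) (T : Set (Fin p × Fin p)) :
    IWOIPid (restrictRange T o k) = restrictRange (IWOIPid T) o k := by
  simp only [restrictRange_eq_preimage h]
  exact IWOIPid_preimage (strictMono_blockEmb h) (ordConnected_range_blockEmb h) T

theorem DWOIPdd_restrictRange (h : o + k ≤ p) (T : Set (Fin p × Fin p)) :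
    DWOIPdd (restrictRange T o k) = restrictRange (DWOIPdd T) o k := by
  simp only [restrictRange_eq_preimage h]
  exact DWOIPdd_preimage (strictMono_blockEmb h) (ordConnected_range_blockEmb h) T

theorem WOIPd_restrictRange (h : o + k ≤ p) (T : Set (Fin p × Fin p)) :
    WOIPd (restrictRange T o k) = restrictRange (WOIPd T) o k := by
  simp only [restrictRange_eq_preimage h]
  exact WOIPd_preimage (strictMono_blockEmb h) (ordConnected_range_blockEmb h) T

end Restriction

section Shuffle

variable {m n : ℕ}

@[simp]
theorem _root_.Fin.castAdd_ne_natAdd (i : Fin m) (j : Fin n) :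
    Fin.castAdd n i ≠ Fin.natAdd m j := by
  simp only [ne_eq, Fin.ext_iff, Fin.val_castAdd, Fin.val_natAdd]
  omega

@[simp]
theorem _root_.Fin.natAdd_ne_castAdd (i : Fin m) (j : Fin n) :
    Fin.natAdd m j ≠ Fin.castAdd n i :=
  (Fin.castAdd_ne_natAdd i j).symm

theorem restrictRange_zero_eq_preimage_castAdd (C : Set (Fin (m + n) × Fin (m + n))) :
    restrictRange C 0 m = Prod.map (Fin.castAdd n) (Fin.castAdd n) ⁻¹' C := by
  rw [restrictRange_eq_preimage (by omega)]
  congr <;> ext <;> simp [blockEmb]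

theorem restrictRange_eq_preimage_natAdd (C : Set (Fin (m + n) × Fin (m + n))) :
    restrictRange C m n = Prod.map (Fin.natAdd m) (Fin.natAdd m) ⁻¹' C := by
  rw [restrictRange_eq_preimage le_rfl]
  rfl

theorem restrictRange_shuffle {A : Set (Fin m × Fin m)} {B : Set (Fin n × Fin n)}
    {I D : Set (Fin (m + n) × Fin (m + n))} (hI : I ⊆ lowHigh m n) (hD : D ⊆ highLow m n) :
    restrictRange (shiftL A ∪ shiftR B ∪ I ∪ D) 0 m = A ∧
      restrictRange (shiftL A ∪ shiftR B ∪ I ∪ D) m n = B := by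
  constructor <;> ext ⟨i, j⟩
  · have hi : (Fin.castAdd n i, Fin.castAdd n j) ∉ I := fun h => (hI h).2.not_gt (by simp)
    have hd : (Fin.castAdd n i, Fin.castAdd n j) ∉ D := fun h => (hD h).1.not_gt (by simp)
    simp [restrictRange_zero_eq_preimage_castAdd, shiftL, shiftR, hi, hd]
  · have hi : (Fin.natAdd m i, Fin.natAdd m j) ∉ I := fun h => (hI h).1.not_ge (by simp)
    have hd : (Fin.natAdd m i, Fin.natAdd m j) ∉ D := fun h => (hD h).2.not_ge (by simp)
    simp [restrictRange_eq_preimage_natAdd, shiftL, shiftR, hi, hd]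

theorem eq_shiftL_union_shiftR_union (C : Set (Fin (m + n) × Fin (m + n))) :
    C = shiftL (restrictRange C 0 m) ∪ shiftR (restrictRange C m n) ∪
      (C ∩ lowHigh m n) ∪ (C ∩ highLow m n) := by
  ext ⟨i, j⟩
  induction i using Fin.addCases <;> induction j using Fin.addCases <;>
    simp [restrictRange_zero_eq_preimage_castAdd, restrictRange_eq_preimage_natAdd, shiftL, shiftR, lowHigh,
      highLow, fun i : Fin m => (Fin.is_lt i).not_ge]

theorem mem_shiftedShuffle_iff {A : Set (Fin m × Fin m)} {B : Set (Fin n × Fin n)}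
    {C : Set (Fin (m + n) × Fin (m + n))} :
    C ∈ shiftedShuffle A B ↔ restrictRange C 0 m = A ∧ restrictRange C m n = B := by
  refine ⟨fun ⟨I, D, hI, hD, hC⟩ => hC ▸ restrictRange_shuffle hI hD, fun ⟨hA, hB⟩ => ?_⟩
  refine ⟨C ∩ lowHigh m n, C ∩ highLow m n, Set.inter_subset_right, Set.inter_subset_right, ?_⟩
  rw [← hA, ← hB]
  exact eq_shiftL_union_shiftR_union C

end Shuffle

theorem fiber_decomposition (F : ∀ {p : ℕ}, Set (Fin p × Fin p) → Set (Fin p × Fin p))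
    (P : ∀ {p : ℕ}, Set (Fin p × Fin p) → Prop)
    (hF : ∀ {p o k : ℕ}, o + k ≤ p → ∀ T : Set (Fin p × Fin p),
      F (restrictRange T o k) = restrictRange (F T) o k)
    (hP : ∀ {p : ℕ} {T : Set (Fin p × Fin p)}, IsIPos T → P (F T))
    {m n : ℕ} (A : Set (Fin m × Fin m)) (B : Set (Fin n × Fin n)) :
    ({T | IsIPos T ∧ F (restrictRange T 0 m) = A ∧ F (restrictRange T m n) = B}
      = ⋃ (C : Set (Fin (m + n) × Fin (m + n))) (_ : C ∈ shiftedShuffle A B ∧ P C),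
          {T | IsIPos T ∧ F T = C}) ∧
    ∀ T : Set (Fin (m + n) × Fin (m + n)), IsIPos T →
      F (restrictRange T 0 m) = A → F (restrictRange T m n) = B →
      ∃! C, C ∈ shiftedShuffle A B ∧ P C ∧ F T = C := by
  have hlow : 0 + m ≤ m + n := by omega
  have mem_iff : ∀ T, F T ∈ shiftedShuffle A B ↔
      F (restrictRange T 0 m) = A ∧ F (restrictRange T m n) = B := fun T => by
    rw [mem_shiftedShuffle_iff, hF hlow, hF le_rfl]
  refine ⟨?_, fun T hT hA hB => ⟨F T, ⟨(mem_iff T).2 ⟨hA, hB⟩, hP hT, rfl⟩,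
    fun C hC => hC.2.2.symm⟩⟩
  ext T
  simp only [Set.mem_ofPred_eq, Set.mem_iUnion, exists_prop]
  constructor
  · rintro ⟨hT, hA, hB⟩
    exact ⟨F T, ⟨(mem_iff T).2 ⟨hA, hB⟩, hP hT⟩, hT, rfl⟩
  · rintro ⟨_, ⟨hC, -⟩, hT, rfl⟩
    exact ⟨hT, (mem_iff T).1 hC⟩

/-- the `WOIP`, `IWOIP` and `DWOIP` deletions commute with
interval restrictions, and the induced fiber decompositions of the shifted
shuffle. -/
theorem WOIPd_restriction_and_fibers :
    (∀ (p : ℕ) (T : Set (Fin p × Fin p)), IsIPos T →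
      ∀ q r : ℕ, 1 ≤ q → q ≤ r → r ≤ p →
        WOIPd (restrictRange T (q - 1) (r - q + 1))
            = restrictRange (WOIPd T) (q - 1) (r - q + 1) ∧
        IWOIPid (restrictRange T (q - 1) (r - q + 1))
            = restrictRange (IWOIPid T) (q - 1) (r - q + 1) ∧
        DWOIPdd (restrictRange T (q - 1) (r - q + 1))
            = restrictRange (DWOIPdd T) (q - 1) (r - q + 1)) ∧
    (∀ (m n : ℕ) (A : Set (Fin m × Fin m)) (B : Set (Fin n × Fin n)),
      InWOIP A → InWOIP B →
        ({T : Set (Fin (m + n) × Fin (m + n)) | IsIPos T ∧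
            WOIPd (restrictRange T 0 m) = A ∧ WOIPd (restrictRange T m n) = B}
          = ⋃ (C : Set (Fin (m + n) × Fin (m + n)))
              (_ : C ∈ shiftedShuffle A B ∧ InWOIP C),
              {T | IsIPos T ∧ WOIPd T = C}) ∧
        ∀ T : Set (Fin (m + n) × Fin (m + n)), IsIPos T →
          WOIPd (restrictRange T 0 m) = A → WOIPd (restrictRange T m n) = B →
          ∃! C : Set (Fin (m + n) × Fin (m + n)),
            C ∈ shiftedShuffle A B ∧ InWOIP C ∧ WOIPd T = C) ∧
    (∀ (m n : ℕ) (A : Set (Fin m × Fin m)) (B : Set (Fin n × Fin n)),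
      InIWOIP A → InIWOIP B →
        ({T : Set (Fin (m + n) × Fin (m + n)) | IsIPos T ∧
            IWOIPid (restrictRange T 0 m) = A ∧ IWOIPid (restrictRange T m n) = B}
          = ⋃ (C : Set (Fin (m + n) × Fin (m + n)))
              (_ : C ∈ shiftedShuffle A B ∧ InIWOIP C),
              {T | IsIPos T ∧ IWOIPid T = C}) ∧
        ∀ T : Set (Fin (m + n) × Fin (m + n)), IsIPos T →
          IWOIPid (restrictRange T 0 m) = A → IWOIPid (restrictRange T m n) = B →
          ∃! C : Set (Fin (m + n) × Fin (m + n)),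
            C ∈ shiftedShuffle A B ∧ InIWOIP C ∧ IWOIPid T = C) ∧
    (∀ (m n : ℕ) (A : Set (Fin m × Fin m)) (B : Set (Fin n × Fin n)),
      InDWOIP A → InDWOIP B →
        ({T : Set (Fin (m + n) × Fin (m + n)) | IsIPos T ∧
            DWOIPdd (restrictRange T 0 m) = A ∧ DWOIPdd (restrictRange T m n) = B}
          = ⋃ (C : Set (Fin (m + n) × Fin (m + n)))
              (_ : C ∈ shiftedShuffle A B ∧ InDWOIP C),
              {T | IsIPos T ∧ DWOIPdd T = C}) ∧
        ∀ T : Set (Fin (m + n) × Fin (m + n)), IsIPos T →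
          DWOIPdd (restrictRange T 0 m) = A → DWOIPdd (restrictRange T m n) = B →
          ∃! C : Set (Fin (m + n) × Fin (m + n)),
            C ∈ shiftedShuffle A B ∧ InDWOIP C ∧ DWOIPdd T = C) := by
  refine ⟨fun p T _ q r hq hqr hrp => ?_, fun m n A B _ _ => ?_, fun m n A B _ _ => ?_,
    fun m n A B _ _ => ?_⟩
  · have h : q - 1 + (r - q + 1) ≤ p := by omega
    exact ⟨WOIPd_restrictRange h T, IWOIPid_restrictRange h T, DWOIPdd_restrictRange h T⟩
  · exact fiber_decomposition WOIPd InWOIP WOIPd_restrictRange inWOIP_WOIPd A B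
  · exact fiber_decomposition IWOIPid InIWOIP IWOIPid_restrictRange inIWOIP_IWOIPid A B
  · exact fiber_decomposition DWOIPdd InDWOIP DWOIPdd_restrictRange inDWOIP_DWOIPdd A B

end IntegerRelations
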